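/- Let n, m, j be positive integers with gcd(n,m) = 1. Then the number of (n,m)-Dyck paths with exactly j peaks equals (1/j)·binomial(n−1, j−1)·binomial(m−1, j−1); equivalently, j times the number of (n,m)-Dyck paths with exactly j peaks equals binomial(n−1, j−1)·binomial(m−1, j−1). -/

import Mathlib

/-- A free `(n,m)`-path: a word over `{U, D}` (here `true` = `U` = step `(0,1)`,
`false` = `D` = step `(1,0)`) with exactly `m` letters `U` and `n` letters `D`. -/
def IsFreePath (n m : ℕ) (w : List Bool) : Prop :=
  w.count true = m ∧ w.count false = n

/-- An `(n,m)`-Dyck path: a free `(n,m)`-path that never goes below the line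
`y = (m/n)x`, i.e. every prefix with `u` letters `U` and `d` letters `D`
satisfies `n·u ≥ m·d`. -/
def IsDyckPath (n m : ℕ) (w : List Bool) : Prop :=
  IsFreePath n m w ∧ ∀ p : List Bool, p <+: w → m * p.count false ≤ n * p.count true

/-- There is a peak (the factor `UD`) starting at position `i` of `w`. -/
def IsPeakAt (w : List Bool) (i : ℕ) : Prop :=
  [true, false] <+: w.drop i

/-- The number of peaks of a word `w`. -/
noncomputable def numPeaks (w : List Bool) : ℕ :=
  {i : ℕ | IsPeakAt w i}.ncard

/-!
A Dyck path with `j` peaks is a word `U^{b₁} D^{a₁} ⋯ U^{bⱼ} D^{aⱼ}` with all `bᵢ, aᵢ > 0`,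
`∑ bᵢ = m` and `∑ aᵢ = n`; the Dyck condition only has to be checked at the ends of the blocks,
where it says that the partial sums of the block heights `n bᵢ - m aᵢ` are nonnegative. These
heights sum to `0`, and when `gcd(n, m) = 1` no proper cyclic window of them sums to `0`: that would
give `n ∑ bᵢ = m ∑ aᵢ` with `0 < ∑ aᵢ < n`. By the cycle lemma, exactly one of the `j` cyclic
rotations of any block sequence is then a Dyck path, so `j` times the number of Dyck paths is the
number of pairs of compositions of `m` and `n` into `j` parts, `C(m-1, j-1) · C(n-1, j-1)`.
-/

-- `(i : Fin j)` for `i : ℕ` is `i mod j`, so `t + i` runs cyclically through `Fin j`.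
open Finset Fin.NatCast

def pathHeight (n m : ℕ) (w : List Bool) : ℤ := n * w.count true - m * w.count false

def blockHeight (n m : ℕ) (p : ℕ × ℕ) : ℤ := n * p.1 - m * p.2

section Words

variable {n m : ℕ}

@[simp] lemma pathHeight_nil : pathHeight n m [] = 0 := by simp [pathHeight]

@[simp] lemma pathHeight_append (u v : List Bool) :
    pathHeight n m (u ++ v) = pathHeight n m u + pathHeight n m v := by
  simp only [pathHeight, List.count_append]; push_cast; ring

@[simp] lemma pathHeight_replicate_true (b : ℕ) :
    pathHeight n m (List.replicate b true) = n * b := by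
  simp [pathHeight, List.count_replicate]

@[simp] lemma pathHeight_replicate_false (a : ℕ) :
    pathHeight n m (List.replicate a false) = -(m * a) := by
  simp [pathHeight, List.count_replicate]

lemma IsFreePath.pathHeight_eq_zero {w : List Bool} (hw : IsFreePath n m w) :
    pathHeight n m w = 0 := by
  rw [pathHeight, hw.1, hw.2]; ring

lemma isDyckPath_iff_pathHeight_nonneg {w : List Bool} :
    IsDyckPath n m w ↔ IsFreePath n m w ∧ ∀ p, p <+: w → 0 ≤ pathHeight n m p := by
  simp only [IsDyckPath, pathHeight, sub_nonneg]
  norm_cast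

lemma numPeaks_eq_sum (w : List Bool) :
    numPeaks w = ∑ i ∈ range w.length, if [true, false] <+: w.drop i then 1 else 0 := by
  have hsub : {i | IsPeakAt w i} = ↑((range w.length).filter fun i => [true, false] <+: w.drop i) := by
    ext i
    simp only [IsPeakAt, Set.mem_ofPred_eq, coe_filter, mem_range, iff_and_self]
    intro h
    have := h.length_le
    simp only [List.length_cons, List.length_nil, zero_add, Nat.reduceAdd, List.length_drop] at this
    omega
  rw [numPeaks, hsub, Set.ncard_coe_finset, card_filter]

lemma numPeaks_cons (x : Bool) (w : List Bool) :
    numPeaks (x :: w) = numPeaks w + if [true, false] <+: x :: w then 1 else 0 := by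
  simp only [numPeaks_eq_sum, List.length_cons, sum_range_succ', List.drop_succ_cons,
    List.drop_zero]

@[simp] lemma numPeaks_false_cons (w : List Bool) : numPeaks (false :: w) = numPeaks w := by
  simp [numPeaks_cons]

lemma numPeaks_replicate_false_append (a : ℕ) (w : List Bool) :
    numPeaks (List.replicate a false ++ w) = numPeaks w := by
  induction a with
  | zero => rfl
  | succ a ih => rw [List.replicate_succ, List.cons_append, numPeaks_false_cons, ih]

lemma numPeaks_replicate_true_append_false_cons {b : ℕ} (hb : 0 < b) (w : List Bool) :
    numPeaks (List.replicate b true ++ false :: w) = numPeaks w + 1 := by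
  induction b with
  | zero => omega
  | succ b ih =>
    rcases b with _ | b
    · simp [numPeaks_cons]
    · rw [List.replicate_succ, List.cons_append, numPeaks_cons, ih (by omega)]
      simp [List.replicate_succ]

end Words

section BlocksWord

variable {n m : ℕ}

def blocksWord (L : List (ℕ × ℕ)) : List Bool :=
  L.flatMap fun p => List.replicate p.1 true ++ List.replicate p.2 false

@[simp] lemma blocksWord_nil : blocksWord [] = [] := rfl

@[simp] lemma blocksWord_cons (p : ℕ × ℕ) (L : List (ℕ × ℕ)) :
    blocksWord (p :: L) = List.replicate p.1 true ++ (List.replicate p.2 false ++ blocksWord L) := by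
  simp [blocksWord]

@[simp] lemma count_true_blocksWord (L : List (ℕ × ℕ)) :
    (blocksWord L).count true = (L.map Prod.fst).sum := by
  induction L with
  | nil => rfl
  | cons p L ih => simp [List.count_replicate, ih]

@[simp] lemma count_false_blocksWord (L : List (ℕ × ℕ)) :
    (blocksWord L).count false = (L.map Prod.snd).sum := by
  induction L with
  | nil => rfl
  | cons p L ih => simp [List.count_replicate, ih]

lemma pathHeight_blocksWord (L : List (ℕ × ℕ)) :
    pathHeight n m (blocksWord L) = (L.map (blockHeight n m)).sum := by
  induction L with
  | nil => rfl
  | cons p L ih =>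
    simp only [blocksWord_cons, pathHeight_append, pathHeight_replicate_true,
      pathHeight_replicate_false, ih, List.map_cons, blockHeight, List.sum_cons]
    ring

lemma numPeaks_blocksWord {L : List (ℕ × ℕ)} (hL : ∀ p ∈ L, 0 < p.1 ∧ 0 < p.2) :
    numPeaks (blocksWord L) = L.length := by
  induction L with
  | nil => simp [numPeaks_eq_sum]
  | cons p L ih =>
    obtain ⟨hb, ha⟩ := hL p List.mem_cons_self
    obtain ⟨a, ha⟩ : ∃ a, p.2 = a + 1 := ⟨p.2 - 1, by omega⟩
    rw [blocksWord_cons, ha, List.replicate_succ, List.cons_append,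
      numPeaks_replicate_true_append_false_cons hb, numPeaks_replicate_false_append,
      ih fun q hq => hL q (List.mem_cons_of_mem p hq), List.length_cons]

lemma head?_blocksWord_ne_false {L : List (ℕ × ℕ)} (hL : ∀ p ∈ L, 0 < p.1 ∧ 0 < p.2) :
    (blocksWord L).head? ≠ some false := by
  cases L with
  | nil => simp
  | cons p L => simp [List.head?_replicate, (hL p List.mem_cons_self).1.ne']

lemma blocksWord_cons_ne_nil {p : ℕ × ℕ} (hp : 0 < p.1) (L : List (ℕ × ℕ)) :
    blocksWord (p :: L) ≠ [] := by
  simp [hp.ne']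

lemma replicate_append_inj {α : Type*} {c : α} {b b' : ℕ} {X Y : List α}
    (hX : X.head? ≠ some c) (hY : Y.head? ≠ some c)
    (h : List.replicate b c ++ X = List.replicate b' c ++ Y) : b = b' ∧ X = Y := by
  induction b generalizing b' with
  | zero =>
    cases b' with
    | zero => simpa using h
    | succ b' =>
      rw [List.replicate_zero, List.nil_append, List.replicate_succ, List.cons_append] at h
      exact absurd (by rw [h]; rfl) hX
  | succ b ih =>
    cases b' with
    | zero =>
      rw [List.replicate_zero, List.nil_append, List.replicate_succ, List.cons_append] at h
      exact absurd (by rw [← h]; rfl) hY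
    | succ b' =>
      simp only [List.replicate_succ, List.cons_append, List.cons.injEq, true_and] at h
      simpa using ih h

lemma blocksWord_injOn : Set.InjOn blocksWord {L | ∀ p ∈ L, 0 < p.1 ∧ 0 < p.2} := by
  intro L₁ hL₁ L₂ hL₂ h
  induction L₁ generalizing L₂ with
  | nil =>
    cases L₂ with
    | nil => rfl
    | cons q L₂ => exact absurd h.symm (blocksWord_cons_ne_nil (hL₂ q List.mem_cons_self).1 L₂)
  | cons p L₁ ih =>
    cases L₂ with
    | nil => exact absurd h (blocksWord_cons_ne_nil (hL₁ p List.mem_cons_self).1 L₁)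
    | cons q L₂ =>
      obtain ⟨hp₁, hp₂⟩ := hL₁ p List.mem_cons_self
      obtain ⟨hq₁, hq₂⟩ := hL₂ q List.mem_cons_self
      have hL₁' := fun r hr => hL₁ r (List.mem_cons_of_mem p hr)
      have hL₂' := fun r hr => hL₂ r (List.mem_cons_of_mem q hr)
      rw [blocksWord_cons, blocksWord_cons] at h
      obtain ⟨h₁, h⟩ := replicate_append_inj (by simp [List.head?_replicate, hp₂.ne'])
        (by simp [List.head?_replicate, hq₂.ne']) h
      obtain ⟨h₂, h⟩ := replicate_append_inj (head?_blocksWord_ne_false hL₁')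
        (head?_blocksWord_ne_false hL₂') h
      rw [Prod.ext h₁ h₂, ih hL₁' hL₂' h]

lemma exists_eq_replicate_append_blocksWord (w : List Bool) :
    ∃ a L b, (∀ p ∈ L, 0 < p.1 ∧ 0 < p.2) ∧
      w = List.replicate a false ++ blocksWord L ++ List.replicate b true := by
  induction w with
  | nil => exact ⟨0, [], 0, by simp, rfl⟩
  | cons x w ih =>
    obtain ⟨a, L, b, hL, rfl⟩ := ih
    cases x with
    | false => exact ⟨a + 1, L, b, hL, by simp [List.replicate_succ]⟩
    | true =>
      rcases a with _ | a
      · cases L with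
        | nil => exact ⟨0, [], b + 1, hL, by simp [List.replicate_succ]⟩
        | cons p L =>
          refine ⟨0, (p.1 + 1, p.2) :: L, b, ?_, by simp [List.replicate_succ]⟩
          simp only [List.mem_cons, forall_eq_or_imp] at hL ⊢
          exact ⟨⟨p.1.succ_pos, hL.1.2⟩, hL.2⟩
      · refine ⟨0, (1, a + 1) :: L, b, ?_, by simp [List.replicate_succ]⟩
        simpa using hL

lemma exists_pathHeight_blocksWord_take_le {L : List (ℕ × ℕ)} {p : List Bool}
    (hp : p <+: blocksWord L) :
    ∃ k ≤ L.length, pathHeight n m (blocksWord (L.take k)) ≤ pathHeight n m p := by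
  induction L generalizing p with
  | nil => exact ⟨0, le_rfl, by simp [List.prefix_nil.mp hp]⟩
  | cons q L ih =>
    obtain ⟨s, hs⟩ := hp
    rw [blocksWord_cons] at hs
    rcases List.append_eq_append_iff.mp hs with ⟨r, hr, -⟩ | ⟨r, rfl, hr⟩
    · obtain ⟨-, hp⟩ := List.prefix_replicate_iff.mp ⟨r, hr.symm⟩
      refine ⟨0, Nat.zero_le _, ?_⟩
      rw [hp]
      simp only [List.take_zero, blocksWord_nil, pathHeight_nil, pathHeight_replicate_true]
      positivity
    rcases List.append_eq_append_iff.mp hr.symm with ⟨r', hr', -⟩ | ⟨r', rfl, hr'⟩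
    · obtain ⟨hlen, hp⟩ := List.prefix_replicate_iff.mp ⟨r', hr'.symm⟩
      refine ⟨1, by simp, ?_⟩
      rw [hp]
      simp only [List.take_succ_cons, List.take_zero, blocksWord_cons, blocksWord_nil,
        List.append_nil, pathHeight_append, pathHeight_replicate_true, pathHeight_replicate_false]
      gcongr
    · obtain ⟨k, hk, hle⟩ := ih ⟨s, hr'.symm⟩
      refine ⟨k + 1, by simpa using hk, ?_⟩
      simpa using hle

lemma isDyckPath_blocksWord_iff {L : List (ℕ × ℕ)} :
    IsDyckPath n m (blocksWord L) ↔ (L.map Prod.fst).sum = m ∧ (L.map Prod.snd).sum = n ∧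
      ∀ k ≤ L.length, 0 ≤ ((L.take k).map (blockHeight n m)).sum := by
  simp only [isDyckPath_iff_pathHeight_nonneg, IsFreePath, count_true_blocksWord, count_false_blocksWord, and_assoc,
    ← pathHeight_blocksWord]
  refine and_congr_right fun _ => and_congr_right fun _ => ⟨fun h k _ => ?_, fun h p hp => ?_⟩
  · exact h _ ((List.take_prefix k L).flatMap _)
  · obtain ⟨k, hk, hle⟩ := exists_pathHeight_blocksWord_take_le (n := n) (m := m) hp
    exact (h k hk).trans hle

lemma IsDyckPath.exists_eq_blocksWord {w : List Bool} (hn : 0 < n) (hm : 0 < m)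
    (hw : IsDyckPath n m w) : ∃ L, (∀ p ∈ L, 0 < p.1 ∧ 0 < p.2) ∧ w = blocksWord L := by
  obtain ⟨a, L, b, hL, rfl⟩ := exists_eq_replicate_append_blocksWord w
  obtain ⟨hfree, hpre⟩ := isDyckPath_iff_pathHeight_nonneg.mp hw
  have ha : a = 0 := by
    have h := hpre _ ((List.prefix_append (List.replicate a false) _).trans (List.prefix_append _ _))
    rw [pathHeight_replicate_false, neg_nonneg] at h
    have : (m : ℤ) * a = 0 := le_antisymm h (by positivity)
    simpa [hm.ne'] using this
  have hb : b = 0 := by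
    have h := hpre _ (List.prefix_append (List.replicate a false ++ blocksWord L) _)
    have hzero := hfree.pathHeight_eq_zero
    rw [pathHeight_append, pathHeight_replicate_true] at hzero
    have : (n : ℤ) * b = 0 := le_antisymm (by linarith) (by positivity)
    simpa [hn.ne'] using this
  subst ha hb
  exact ⟨L, hL, by simp⟩

end BlocksWord

/-- The blocks `(bᵢ, aᵢ)` of a free `(n,m)`-path `U^{b₀} D^{a₀} ⋯ U^{b_{j-1}} D^{a_{j-1}}` with
exactly `j` peaks. -/
def IsBlockTuple {j : ℕ} (n m : ℕ) (g : Fin j → ℕ × ℕ) : Prop :=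
  (∀ i, 0 < (g i).1 ∧ 0 < (g i).2) ∧ ∑ i, (g i).1 = m ∧ ∑ i, (g i).2 = n

def IsDyckTuple {j : ℕ} (n m : ℕ) [NeZero j] (g : Fin j → ℕ × ℕ) : Prop :=
  ∀ k ≤ j, 0 ≤ ∑ i ∈ range k, blockHeight n m (g i)

section BlockTuples

variable {n m j : ℕ}

lemma sum_take_ofFn [NeZero j] {M : Type*} [AddCommMonoid M] (f : Fin j → M) {k : ℕ}
    (hk : k ≤ j) : ((List.ofFn f).take k).sum = ∑ i ∈ range k, f i := by
  induction k with
  | zero => simp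
  | succ k ih =>
    have hkj : k < j := hk
    rw [List.take_add_one, List.sum_append, ih hkj.le, sum_range_succ, List.getElem?_ofFn]
    simp [hkj, Fin.natCast_eq_mk hkj]

lemma isBlockTuple_and_isDyckTuple_iff [NeZero j] (g : Fin j → ℕ × ℕ) :
    IsBlockTuple n m g ∧ IsDyckTuple n m g ↔
      (∀ p ∈ List.ofFn g, 0 < p.1 ∧ 0 < p.2) ∧ IsDyckPath n m (blocksWord (List.ofFn g)) := by
  simp only [isDyckPath_blocksWord_iff, IsBlockTuple, IsDyckTuple, List.forall_mem_ofFn_iff,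
    List.map_take, List.map_ofFn, List.sum_ofFn, List.length_ofFn, Function.comp_apply, and_assoc]
  refine and_congr_right' <| and_congr_right' <| and_congr_right' <| forall₂_congr fun k hk => ?_
  rw [sum_take_ofFn _ hk, Function.comp_def]

lemma setOf_isDyckPath_numPeaks_eq_image [NeZero j] (hn : 0 < n) (hm : 0 < m) :
    {w | IsDyckPath n m w ∧ numPeaks w = j} =
      (fun g : Fin j → ℕ × ℕ => blocksWord (List.ofFn g)) ''
        {g | IsBlockTuple n m g ∧ IsDyckTuple n m g} := by
  ext w
  simp only [Set.mem_ofPred_eq, Set.mem_image, isBlockTuple_and_isDyckTuple_iff]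
  constructor
  · rintro ⟨hw, hj⟩
    obtain ⟨L, hL, rfl⟩ := hw.exists_eq_blocksWord hn hm
    rw [numPeaks_blocksWord hL] at hj
    subst hj
    exact ⟨L.get, by rw [List.ofFn_get]; exact ⟨⟨hL, hw⟩, rfl⟩⟩
  · rintro ⟨g, ⟨hg, hw⟩, rfl⟩
    exact ⟨hw, by rw [numPeaks_blocksWord hg, List.length_ofFn]⟩

lemma injOn_blocksWord_ofFn :
    Set.InjOn (fun g : Fin j → ℕ × ℕ => blocksWord (List.ofFn g)) {g | IsBlockTuple n m g} :=
  blocksWord_injOn.comp List.ofFn_injective.injOn fun _ hg => List.forall_mem_ofFn_iff.mpr hg.1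

end BlockTuples

section CycleLemma

variable {j : ℕ} [NeZero j]

lemma sum_range_add_eq_sum_univ {M : Type*} [AddCommMonoid M] (f : Fin j → M) (t : Fin j) :
    ∑ i ∈ range j, f (t + i) = ∑ i, f i := by
  rw [← Fin.sum_univ_eq_sum_range (fun i => f (t + i))]
  simp only [Fin.cast_val_eq_self]
  exact Equiv.sum_comp (Equiv.addLeft t) f

lemma sum_range_add_eq_sub (x : Fin j → ℤ) (t : Fin j) (k : ℕ) :
    ∑ i ∈ range k, x (t + i) = ∑ i ∈ range (t + k), x i - ∑ i ∈ range t, x i := by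
  simp [sum_range_add, Nat.cast_add]

lemma sum_range_eq_sum_range_mod (x : Fin j → ℤ) (hx : ∑ i, x i = 0) (k : ℕ) :
    ∑ i ∈ range k, x i = ∑ i ∈ range (k % j), x i := by
  have hperiod : ∀ l, ∑ i ∈ range (l + j), x i = ∑ i ∈ range l, x i := fun l => by
    rw [sum_range_add]
    simp only [Nat.cast_add, sum_range_add_eq_sum_univ x l, hx, add_zero]
  conv_lhs => rw [← Nat.mod_add_div k j]
  induction k / j with
  | zero => simp
  | succ q ih => rw [Nat.mul_succ, ← add_assoc, hperiod, ih]

/-- The cycle lemma: the rotations with nonnegative prefix sums are those starting at a global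
minimum of the (periodic) prefix sums, and nonzero window sums make that minimum unique. -/
theorem existsUnique_forall_sum_range_nonneg (x : Fin j → ℤ) (hx : ∑ i, x i = 0)
    (hwindow : ∀ (t : Fin j) (d : ℕ), 0 < d → d < j → ∑ i ∈ range d, x (t + i) ≠ 0) :
    ∃! t : Fin j, ∀ k ≤ j, 0 ≤ ∑ i ∈ range k, x (t + i) := by
  set Q : ℕ → ℤ := fun k => ∑ i ∈ range k, x i
  have hgood : ∀ t : Fin j, (∀ k ≤ j, 0 ≤ ∑ i ∈ range k, x (t + i)) ↔ ∀ s : Fin j, Q t ≤ Q s := by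
    intro t
    simp only [sum_range_add_eq_sub, sub_nonneg]
    constructor
    · intro h s
      rcases le_or_gt (t : ℕ) s with hts | hst
      · simpa [Nat.add_sub_cancel' hts] using h (s - t) (by omega)
      · have := h (s + j - t) (by omega)
        rwa [show (t : ℕ) + (s + j - t) = s + j by omega, sum_range_eq_sum_range_mod x hx (s + j),
          Nat.add_mod_right, Nat.mod_eq_of_lt s.isLt] at this
    · intro h k _
      rw [sum_range_eq_sum_range_mod x hx (t + k)]
      exact h ⟨_, Nat.mod_lt _ (NeZero.pos j)⟩
  have hdistinct : ∀ s s' : Fin j, s < s' → Q s ≠ Q s' := fun s s' hss' => by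
    have := hwindow s (s' - s) (by omega) (by omega)
    rwa [sum_range_add_eq_sub, Nat.add_sub_cancel' hss'.le, sub_ne_zero, ne_comm] at this
  obtain ⟨t, -, ht⟩ := exists_min_image univ (fun t : Fin j => Q t) univ_nonempty
  refine ⟨t, (hgood t).2 fun s => ht s (mem_univ s), fun t' ht' => ?_⟩
  have heq : Q t' = Q t := le_antisymm ((hgood t').1 ht' t) (ht t' (mem_univ _))
  rcases lt_trichotomy t' t with h | h | h
  · exact absurd heq (hdistinct _ _ h)
  · exact h
  · exact absurd heq.symm (hdistinct _ _ h)

end CycleLemma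

section Counting

variable {n m j : ℕ}

lemma IsBlockTuple.rotate [NeZero j] {g : Fin j → ℕ × ℕ} (hg : IsBlockTuple n m g) (t : Fin j) :
    IsBlockTuple n m fun i => g (t + i) :=
  ⟨fun i => hg.1 (t + i), (Equiv.sum_comp (Equiv.addLeft t) fun i => (g i).1).trans hg.2.1,
    (Equiv.sum_comp (Equiv.addLeft t) fun i => (g i).2).trans hg.2.2⟩

lemma IsBlockTuple.sum_blockHeight {g : Fin j → ℕ × ℕ} (hg : IsBlockTuple n m g) :
    ∑ i, blockHeight n m (g i) = 0 := by
  simp only [blockHeight, sum_sub_distrib, ← mul_sum]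
  rw [← Nat.cast_sum, ← Nat.cast_sum, hg.2.1, hg.2.2]
  ring

lemma IsBlockTuple.sum_range_blockHeight_ne_zero [NeZero j] (hnm : Nat.Coprime n m)
    {g : Fin j → ℕ × ℕ} (hg : IsBlockTuple n m g) (t : Fin j) {d : ℕ} (hd : 0 < d) (hdj : d < j) :
    ∑ i ∈ range d, blockHeight n m (g (t + i)) ≠ 0 := by
  set X := ∑ i ∈ range d, (g (t + i)).1
  set Y := ∑ i ∈ range d, (g (t + i)).2
  have hcount : ∀ l k, l ≤ ∑ i ∈ range l, (g (t + ↑(k + i))).2 := fun l k => by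
    simpa using card_nsmul_le_sum (range l) (fun i => (g (t + ↑(k + i))).2) 1
      fun i _ => (hg.1 _).2
  have hY : Y + ∑ i ∈ range (j - d), (g (t + ↑(d + i))).2 = n := by
    rw [← sum_range_add (fun i => (g (t + i)).2), Nat.add_sub_cancel' hdj.le,
      sum_range_add_eq_sum_univ (fun i => (g i).2), hg.2.2]
  have hY₀ : 0 < Y := by simpa using (hcount d 0).trans_lt' hd
  have hYn : Y < n := by have := hcount (j - d) d; omega
  intro h
  -- `n X = m Y` with `n` coprime to `m` forces `n ∣ Y`, impossible for `0 < Y < n`.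
  have hXY : n * X = m * Y := by
    simp only [blockHeight, sum_sub_distrib, ← mul_sum, sub_eq_zero] at h
    exact_mod_cast h
  exact absurd (Nat.le_of_dvd hY₀ (hnm.dvd_of_dvd_mul_left ⟨X, hXY.symm⟩)) (not_le.mpr hYn)

lemma IsBlockTuple.existsUnique_isDyckTuple_rotate [NeZero j] (hnm : Nat.Coprime n m)
    {g : Fin j → ℕ × ℕ} (hg : IsBlockTuple n m g) :
    ∃! t : Fin j, IsDyckTuple n m fun i => g (t + i) :=
  existsUnique_forall_sum_range_nonneg _ hg.sum_blockHeight
    fun t _ hd hdj => hg.sum_range_blockHeight_ne_zero hnm t hd hdj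

/-- Double counting the pairs `(g, t)` whose rotation `g (t + ·)` is Dyck: each `g` has exactly one
such `t`, and `(g, t) ↦ (g (t + ·), t)` is a bijection onto Dyck tuples times `Fin j`. -/
lemma card_isBlockTuple_eq_mul [NeZero j] (hnm : Nat.Coprime n m) :
    Nat.card {g : Fin j → ℕ × ℕ // IsBlockTuple n m g} =
      Nat.card {g : Fin j → ℕ × ℕ // IsBlockTuple n m g ∧ IsDyckTuple n m g} * j := by
  let Pairs := {p : {g : Fin j → ℕ × ℕ // IsBlockTuple n m g} × Fin j //
    IsDyckTuple n m fun i => p.1.1 (p.2 + i)}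
  let forget : Pairs → {g : Fin j → ℕ × ℕ // IsBlockTuple n m g} := fun p => p.1.1
  have hforget : forget.Bijective := by
    refine ⟨fun p q hpq => ?_, fun g => ?_⟩
    · have h₁ : p.1.1 = q.1.1 := hpq
      have h₂ := (p.1.1.2.existsUnique_isDyckTuple_rotate hnm).unique p.2 (h₁ ▸ q.2)
      exact Subtype.ext (Prod.ext h₁ h₂)
    · obtain ⟨t, ht, -⟩ := g.2.existsUnique_isDyckTuple_rotate hnm
      exact ⟨⟨(g, t), ht⟩, rfl⟩
  let rotate : Pairs ≃ {g : Fin j → ℕ × ℕ // IsBlockTuple n m g ∧ IsDyckTuple n m g} × Fin j :=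
    { toFun := fun p => (⟨fun i => p.1.1.1 (p.1.2 + i), p.1.1.2.rotate _, p.2⟩, p.1.2)
      invFun := fun q => ⟨(⟨fun i => q.1.1 (-q.2 + i), q.1.2.1.rotate _⟩, q.2), by
        simpa using q.1.2.2⟩
      left_inv := fun p => by simp
      right_inv := fun q => by simp }
  rw [← Nat.card_congr (Equiv.ofBijective forget hforget), Nat.card_congr rotate, Nat.card_prod,
    Nat.card_fin]

lemma card_pos_sum_eq_choose (hj : 0 < j) (hm : 0 < m) :
    Nat.card {b : Fin j → ℕ // (∀ i, 0 < b i) ∧ ∑ i, b i = m} = (m - 1).choose (j - 1) := by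
  have hsucc : ∀ c : Fin j → ℕ, ∑ i, (c i + 1) = ∑ i, c i + j := fun c => by
    simp [sum_add_distrib]
  let shift : {b : Fin j → ℕ // (∀ i, 0 < b i) ∧ ∑ i, b i = m} ≃
      {c : Fin j → ℕ // ∑ i, c i + j = m} :=
    { toFun := fun b => ⟨fun i => b.1 i - 1, (hsucc _).symm.trans <|
        (sum_congr rfl fun i _ => Nat.sub_add_cancel (b.2.1 i)).trans b.2.2⟩
      invFun := fun c => ⟨fun i => c.1 i + 1, fun i => Nat.succ_pos _, (hsucc c.1).trans c.2⟩
      left_inv := fun b => Subtype.ext <| funext fun i => Nat.sub_add_cancel (b.2.1 i)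
      right_inv := fun c => Subtype.ext <| funext fun i => Nat.add_sub_cancel _ _ }
  rw [Nat.card_congr shift]
  rcases le_or_gt j m with hjm | hmj
  · let sum : {c : Fin j → ℕ // ∑ i, c i + j = m} ≃ Sym (Fin j) (m - j) :=
      (Equiv.subtypeEquivRight fun c => by omega).trans (Sym.equivNatSumOfFintype _ _).symm
    rw [Nat.card_congr sum, Sym.natCard_sym_eq_choose, Nat.card_fin,
      show j + (m - j) - 1 = m - 1 by omega,
      Nat.choose_symm_of_eq_add (show m - 1 = m - j + (j - 1) by omega)]
  · rw [Nat.choose_eq_zero_of_lt (by omega), Nat.card_eq_zero]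
    exact Or.inl ⟨fun c => by omega⟩

lemma card_isBlockTuple (hj : 0 < j) (hn : 0 < n) (hm : 0 < m) :
    Nat.card {g : Fin j → ℕ × ℕ // IsBlockTuple n m g} =
      (m - 1).choose (j - 1) * (n - 1).choose (j - 1) := by
  let split : {g : Fin j → ℕ × ℕ // IsBlockTuple n m g} ≃
      {b : Fin j → ℕ // (∀ i, 0 < b i) ∧ ∑ i, b i = m} ×
        {a : Fin j → ℕ // (∀ i, 0 < a i) ∧ ∑ i, a i = n} :=
    { toFun := fun g => (⟨fun i => (g.1 i).1, fun i => (g.2.1 i).1, g.2.2.1⟩,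
        ⟨fun i => (g.1 i).2, fun i => (g.2.1 i).2, g.2.2.2⟩)
      invFun := fun p => ⟨fun i => (p.1.1 i, p.2.1 i),
        fun i => ⟨p.1.2.1 i, p.2.2.1 i⟩, p.1.2.2, p.2.2.2⟩
      left_inv := fun _ => rfl
      right_inv := fun _ => rfl }
  rw [Nat.card_congr split, Nat.card_prod, card_pos_sum_eq_choose hj hm,
    card_pos_sum_eq_choose hj hn]

end Counting

/-- For `gcd(n,m) = 1`, the number of `(n,m)`-Dyck paths with exactly `j` peaks is
`(1/j)·C(n−1, j−1)·C(m−1, j−1)`: `j` times this number equals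
`C(n−1, j−1)·C(m−1, j−1)`. -/
theorem stmt12 (n m j : ℕ) (hn : 0 < n) (hm : 0 < m) (hj : 0 < j)
    (h : Nat.gcd n m = 1) :
    j * {w : List Bool | IsDyckPath n m w ∧ numPeaks w = j}.ncard =
      (n - 1).choose (j - 1) * (m - 1).choose (j - 1) := by
  have : NeZero j := ⟨hj.ne'⟩
  rw [setOf_isDyckPath_numPeaks_eq_image hn hm,
    (injOn_blocksWord_ofFn.mono fun _ hg => hg.1).ncard_image, ← Nat.card_coe_set_eq]
  calc j * Nat.card {g : Fin j → ℕ × ℕ | IsBlockTuple n m g ∧ IsDyckTuple n m g}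
      = Nat.card {g : Fin j → ℕ × ℕ // IsBlockTuple n m g} := by
        rw [card_isBlockTuple_eq_mul h, mul_comm]; rfl
    _ = (n - 1).choose (j - 1) * (m - 1).choose (j - 1) := by
        rw [card_isBlockTuple hj hn hm, mul_comm]
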